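/- arXiv:0909.3378 — 3 statements merged into one kernel-verified Lean document; each statement's English description precedes it below -/
import Mathlib

section
/- Let p, q be real numbers with q ≠ 0, T > 0, and suppose (pT, qT) ∈ ℤ² with pT and qT coprime integers (so there exist integers r, s with pT·r − qT·s = 1). Let f : ℝ² → ℝ be ℤ²-periodic (i.e., f(x+m, y+n) = f(x,y) for all integers m,n). Define F(λ) = (1/T)∫₀ᵀ f(pt, qt + λ) dt. Then F is (1/(pT))-periodic: F(λ + 1/(pT)) = F(λ) for all λ ∈ ℝ. -/
/-!
Since `(pT, qT) = (a, b) ∈ ℤ²`, the integrand `t ↦ f (p t, q t + λ)` is `T`-periodic, so its integral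
over `[0, T]` is unchanged by a time shift `t ↦ t + c`. Bézout `a r - b s = 1` supplies the shift
`c = s T / a`: it moves the line by `(p c, q c) = (s, r - 1/(pT))`, an integer vector minus the offset
`1/(pT)` in the second coordinate, so it turns the integrand for `λ + 1/(pT)` into the one for `λ`.
-/

open intervalIntegral

theorem Function.Periodic.intervalIntegral_comp_add_right {g : ℝ → ℝ} {T : ℝ}
    (hg : Function.Periodic g T) (a c : ℝ) :
    ∫ t in a..a + T, g (t + c) = ∫ t in a..a + T, g t := by
  rw [integral_comp_add_right, add_right_comm, hg.intervalIntegral_add_eq]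

section LinesOnTorus

variable {f : ℝ × ℝ → ℝ} (hper : ∀ (x y : ℝ) (m n : ℤ), f (x + m, y + n) = f (x, y))
include hper

theorem periodic_comp_line {p q T : ℝ} {a b : ℤ} (ha : p * T = a) (hb : q * T = b) (μ : ℝ) :
    Function.Periodic (fun t => f (p * t, q * t + μ)) T := by
  intro t
  have hx : p * (t + T) = p * t + a := by rw [mul_add, ha]
  have hy : q * (t + T) + μ = (q * t + μ) + b := by rw [mul_add, hb]; ring
  simp only [hx, hy, hper]

theorem comp_line_add_time {p q c δ : ℝ} {r s : ℤ} (hpc : p * c = s) (hqc : q * c + δ = r)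
    (t μ : ℝ) : f (p * (t + c), q * (t + c) + (μ + δ)) = f (p * t, q * t + μ) := by
  have hx : p * (t + c) = p * t + s := by rw [mul_add, hpc]
  have hy : q * (t + c) + (μ + δ) = (q * t + μ) + r := by rw [mul_add, ← hqc]; ring
  rw [hx, hy, hper]

end LinesOnTorus

theorem bezout_time_shift {p q T : ℝ} {a b r s : ℤ} (ha0 : (a : ℝ) ≠ 0) (ha : p * T = a)
    (hb : q * T = b) (hbezout : (a : ℝ) * r - (b : ℝ) * s = 1) :
    p * (s * T / a) = s ∧ q * (s * T / a) + 1 / (p * T) = r := by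
  constructor
  · field_simp
    rw [← ha]
    ring
  · rw [ha]
    field_simp
    linear_combination (s : ℝ) * hb - hbezout

theorem stmt_0_general (p q T : ℝ) (hT : 0 < T) (hp : p ≠ 0)
    (a b r s : ℤ) (ha : p * T = a) (hb : q * T = b)
    (hbezout : (a : ℝ) * r - (b : ℝ) * s = 1)
    (f : ℝ × ℝ → ℝ)
    (hper : ∀ (x y : ℝ) (m n : ℤ), f (x + m, y + n) = f (x, y))
    (F : ℝ → ℝ)
    (hF : ∀ l, F l = (1 / T) * ∫ t in (0:ℝ)..T, f (p * t, q * t + l)) :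
    ∀ l : ℝ, F (l + 1 / (p * T)) = F l := by
  intro l
  have ha0 : (a : ℝ) ≠ 0 := ha ▸ mul_ne_zero hp hT.ne'
  obtain ⟨hpc, hqc⟩ := bezout_time_shift ha0 ha hb hbezout
  have hshift := (periodic_comp_line hper ha hb (l + 1 / (p * T))).intervalIntegral_comp_add_right
    0 (s * T / a)
  simp only [zero_add, comp_line_add_time hper hpc hqc] at hshift
  rw [hF, hF, hshift]

theorem stmt_0 (p q T : ℝ) (hT : 0 < T) (hq : q ≠ 0) (hp : p ≠ 0)
    (a b r s : ℤ) (ha : p * T = a) (hb : q * T = b)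
    (hbezout : (a : ℝ) * r - (b : ℝ) * s = 1)
    (f : ℝ × ℝ → ℝ) (hf : Continuous f)
    (hper : ∀ (x y : ℝ) (m n : ℤ), f (x + m, y + n) = f (x, y))
    (F : ℝ → ℝ)
    (hF : ∀ l, F l = (1 / T) * ∫ t in (0:ℝ)..T, f (p * t, q * t + l)) :
    ∀ l : ℝ, F (l + 1 / (p * T)) = F l :=
  stmt_0_general p q T hT hp a b r s ha hb hbezout f hper F hF
end

section
/- Let F : ℝ → ℝ be a C⁴ function that is δ-periodic (δ > 0, δ ≤ 1), and suppose ∫₀¹ F(λ) dλ − F(0) ≥ C·δ⁴ for some C > 0. Then there exists λ ∈ ℝ with |F⁽⁴⁾(λ)| ≥ C. -/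
/-!
By the mean value theorem for integrals, `F a - F 0 ≥ C δ⁴` for some `a`. Reducing `a` modulo the
period to `[0, δ)` and applying the mean value theorem gives `C δ⁴ ≤ δ |F' x₁|`. Each derivative
`F⁽ᵏ⁾` with `k ≥ 1` is periodic with a zero (by Rolle) in every interval of length `δ`, so the mean
value theorem from that zero gives `|F⁽ᵏ⁾ x| ≤ δ |F⁽ᵏ⁺¹⁾ y|`. Chaining, `C δ⁴ ≤ δ⁴ |F⁽⁴⁾ y|`.
-/

open Function

theorem Function.Periodic.iteratedDeriv {𝕜 E : Type*} [NontriviallyNormedField 𝕜]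
    [NormedAddCommGroup E] [NormedSpace 𝕜 E] {f : 𝕜 → E} {c : 𝕜} (hp : Periodic f c)
    (n : ℕ) : Periodic (iteratedDeriv n f) c := fun x => by
  have hshift : (fun z => f (z + c)) = f := funext hp
  simpa only [hshift] using (congrFun (iteratedDeriv_comp_add_const n f c) x).symm

theorem exists_abs_sub_eq_mul_abs_deriv {u : ℝ → ℝ} (hu : Differentiable ℝ u) {a b : ℝ}
    (hab : a ≤ b) : ∃ c, |u b - u a| = (b - a) * |deriv u c| := by
  rcases hab.eq_or_lt with rfl | hab
  · exact ⟨a, by simp⟩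
  obtain ⟨c, -, hc⟩ := exists_deriv_eq_slope u hab hu.continuous.continuousOn
    fun y _ => (hu y).differentiableWithinAt
  refine ⟨c, ?_⟩
  rw [hc, abs_div, abs_of_pos (sub_pos.2 hab), mul_div_cancel₀ _ (sub_pos.2 hab).ne']

section Periodic

variable {f : ℝ → ℝ} {δ : ℝ}

theorem Function.Periodic.exists_abs_sub_le_mul_abs_deriv (hp : Periodic f δ) (hδ : 0 < δ)
    (hf : Differentiable ℝ f) (a b : ℝ) : ∃ x, |f a - f b| ≤ δ * |deriv f x| := by
  obtain ⟨a', ha', hfa⟩ := hp.exists_mem_Ico hδ a b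
  obtain ⟨x, hx⟩ := exists_abs_sub_eq_mul_abs_deriv hf ha'.1
  refine ⟨x, ?_⟩
  rw [hfa, hx]
  gcongr
  linarith [ha'.2]

theorem Function.Periodic.exists_abs_deriv_le_mul_abs_deriv_deriv (hp : Periodic f δ)
    (hδ : 0 < δ) (hf : Continuous f) (hf' : Differentiable ℝ (deriv f)) (x : ℝ) :
    ∃ y, |deriv f x| ≤ δ * |deriv (deriv f) y| := by
  obtain ⟨w, hw, hw0⟩ := exists_deriv_eq_zero (lt_add_of_pos_right x hδ) hf.continuousOn (hp x).symm
  obtain ⟨y, hy⟩ := exists_abs_sub_eq_mul_abs_deriv hf' hw.1.le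
  refine ⟨y, ?_⟩
  calc |deriv f x| = |deriv f w - deriv f x| := by rw [hw0, zero_sub, abs_neg]
    _ = (w - x) * |deriv (deriv f) y| := hy
    _ ≤ δ * |deriv (deriv f) y| := by gcongr; linarith [hw.2]

theorem Function.Periodic.exists_abs_deriv_le_pow_mul_abs_iteratedDeriv (hp : Periodic f δ)
    (hδ : 0 < δ) {n : WithTop ℕ∞} (hf : ContDiff ℝ n f) (k : ℕ) (hk : (k : WithTop ℕ∞) < n)
    (x : ℝ) : ∃ y, |deriv f x| ≤ δ ^ k * |_root_.iteratedDeriv (k + 1) f y| := by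
  induction k with
  | zero => exact ⟨x, by simp⟩
  | succ k ih =>
    have hk_lt : (k : WithTop ℕ∞) < n := lt_of_le_of_lt (by exact_mod_cast k.le_succ) hk
    obtain ⟨y, hy⟩ := ih hk_lt
    obtain ⟨z, hz⟩ := (hp.iteratedDeriv k).exists_abs_deriv_le_mul_abs_deriv_deriv hδ
      (hf.continuous_iteratedDeriv k hk_lt.le)
      (by simpa only [iteratedDeriv_succ] using hf.differentiable_iteratedDeriv (k + 1) hk) y
    simp only [← iteratedDeriv_succ] at hz
    refine ⟨z, ?_⟩
    calc |deriv f x| ≤ δ ^ k * |_root_.iteratedDeriv (k + 1) f y| := hy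
      _ ≤ δ ^ k * (δ * |_root_.iteratedDeriv (k + 1 + 1) f z|) := by gcongr
      _ = δ ^ (k + 1) * |_root_.iteratedDeriv (k + 1 + 1) f z| := by ring

end Periodic

theorem stmt_8_general (F : ℝ → ℝ) (δ C : ℝ) (hδ : 0 < δ)
    (hF : ContDiff ℝ 4 F) (hper : ∀ l, F (l + δ) = F l)
    (hosc : (∫ l in (0:ℝ)..1, F l) - F 0 ≥ C * δ ^ 4) :
    ∃ l : ℝ, |iteratedDeriv 4 F l| ≥ C := by
  have hp : Periodic F δ := hper
  obtain ⟨a, -, ha⟩ := exists_eq_interval_average (zero_ne_one' ℝ) hF.continuous.continuousOn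
  rw [interval_average_eq_div, sub_zero, div_one] at ha
  obtain ⟨x, hx⟩ := hp.exists_abs_sub_le_mul_abs_deriv hδ (hF.differentiable (by norm_num)) a 0
  obtain ⟨y, hy⟩ := hp.exists_abs_deriv_le_pow_mul_abs_iteratedDeriv hδ hF 3 (by norm_num) x
  refine ⟨y, le_of_mul_le_mul_left ?_ (pow_pos hδ 4)⟩
  calc δ ^ 4 * C ≤ |F a - F 0| := by linarith [le_abs_self (F a - F 0)]
    _ ≤ δ * (δ ^ 3 * |iteratedDeriv 4 F y|) := hx.trans (by gcongr)
    _ = δ ^ 4 * |iteratedDeriv 4 F y| := by ring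

theorem stmt_8 (F : ℝ → ℝ) (δ C : ℝ) (hδ : 0 < δ) (hδ1 : δ ≤ 1) (hC : 0 < C)
    (hF : ContDiff ℝ 4 F) (hper : ∀ l, F (l + δ) = F l)
    (hosc : (∫ l in (0:ℝ)..1, F l) - F 0 ≥ C * δ ^ 4) :
    ∃ l : ℝ, |iteratedDeriv 4 F l| ≥ C :=
  stmt_8_general F δ C hδ hF hper hosc
end

section
/- Let p, q be reals with p ≠ 0, T > 0, pT and qT integers with pT·r − qT·s = 1 for some integers r, s. Then for all real t, the point (pt, qt + 1/(pT)) is congruent modulo ℤ² to (p(t − s/p), q(t − s/p)). -/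
theorem stmt_16 (p q T : ℝ) (hT : 0 < T) (hp : p ≠ 0)
    (a b r s : ℤ) (ha : p * T = a) (hb : q * T = b)
    (hbezout : (a : ℝ) * r - (b : ℝ) * s = 1) (t : ℝ) :
    ∃ m n : ℤ, p * t - p * (t - s / p) = m ∧
      (q * t + 1 / (p * T)) - q * (t - s / p) = n := by
  have hpT : p * T ≠ 0 := mul_ne_zero hp hT.ne'
  refine ⟨s, r, by field_simp; ring, ?_⟩
  calc q * t + 1 / (p * T) - q * (t - s / p) = (1 + q * T * s) / (p * T) := by
        field_simp; ring
    _ = r := by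
        rw [div_eq_iff hpT]
        linear_combination -hbezout + (s : ℝ) * hb - (r : ℝ) * ha
end
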